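/- arXiv:2008.09177 — 2 statements merged into one kernel-verified Lean document; each statement's English description precedes it below -/
import Mathlib

section
/- Let $u=(u_1,\dots,u_n):[t_0,\infty)\to(0,\infty)^n$ be continuously differentiable, $0<\alpha\le 1$, $a_i>0$, $u_i^*>0$, and $g_i:(0,\infty)\to(0,\infty)$ differentiable and strictly increasing for each $i$. Define $V(u)=\sum_{i=1}^n a_i\Psi_i(u_i)$ with $\Psi_i(u_i)=u_i-u_i^*-\int_{u_i^*}^{u_i}\frac{g_i(u_i^*)}{g_i(s)}ds$. Then for all $t\ge t_0$, $\,{}^{C}_{t_0}D^{\alpha}_t\,V(u(t))\le\sum_{i=1}^n a_i\left(1-\frac{g_i(u_i^*)}{g_i(u_i(t))}\right)\,{}^{C}_{t_0}D^{\alpha}_t\,u_i(t)$. -/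
open MeasureTheory Filter Set

/-- Caputo fractional derivative of order `α ∈ (0,1]`. -/
noncomputable def caputo (t0 α : ℝ) (u : ℝ → ℝ) (t : ℝ) : ℝ :=
  if α = 1 then deriv u t
  else (1 / Real.Gamma (1 - α)) * ∫ y in t0..t, deriv u y / (t - y) ^ α

open scoped Topology

/-!
By linearity of the Caputo derivative it suffices to bound each summand. Each `Ψᵢ` has the
monotone derivative `φᵢ = 1 - gᵢ(uᵢ*)/gᵢ`, hence lies above its tangents, so
`F = Ψᵢ ∘ uᵢ - φᵢ(uᵢ t) • uᵢ` attains its minimum over `[t0, t]` at `t`, where `F' t = 0`.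
For such an `F` the Caputo integral `∫ F'(y) (t - y)^(-α)` is nonpositive: integrating by parts
on `[t0, s]` bounds it by `(F s - F t) (t - s)^(-α)`, since the kernel increases, and this
boundary term is `O((t - s)^(1 - α)) → 0` as `s → t⁻`.
-/

lemma intervalIntegrable_div_sub_rpow {ψ : ℝ → ℝ} {t0 t α : ℝ} (ht : t0 ≤ t) (hα : α < 1)
    (hψ : ContinuousOn ψ (Icc t0 t)) :
    IntervalIntegrable (fun y => ψ y / (t - y) ^ α) volume t0 t := by
  obtain ⟨M, hM⟩ := isCompact_Icc.exists_bound_of_continuousOn hψ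
  have hdom : IntervalIntegrable (fun y => M * (t - y) ^ (-α)) volume t0 t := by
    have := (intervalIntegral.intervalIntegrable_rpow' (a := t - t0) (b := t - t)
      (r := -α) (by linarith)).comp_sub_left t
    simpa using this.const_mul M
  refine hdom.mono_fun ?_ ?_
  · rw [uIoc_of_le ht]
    exact ((hψ.mono Ioc_subset_Icc_self).aestronglyMeasurable measurableSet_Ioc).aemeasurable
      |>.div (by fun_prop) |>.aestronglyMeasurable
  · rw [uIoc_of_le ht]
    filter_upwards [ae_restrict_mem measurableSet_Ioc] with y hy
    have hty : 0 ≤ t - y := sub_nonneg.2 hy.2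
    calc ‖ψ y / (t - y) ^ α‖ = ‖ψ y‖ * (t - y) ^ (-α) := by
          rw [Real.rpow_neg hty, div_eq_mul_inv, norm_mul, norm_inv,
            Real.norm_of_nonneg (Real.rpow_nonneg hty α)]
      _ ≤ ‖M‖ * (t - y) ^ (-α) := by
          gcongr
          exact (hM y (Ioc_subset_Icc_self hy)).trans (Real.le_norm_self M)
      _ = ‖M * (t - y) ^ (-α)‖ := by
          rw [norm_mul, Real.norm_of_nonneg (Real.rpow_nonneg hty _)]

/-- Integration by parts against the kernel `(t - y) ^ (-α)`, whose derivative is `≥ 0`. -/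
lemma integral_div_sub_rpow_le {G G' : ℝ → ℝ} {t0 s t α : ℝ} (hs : t0 ≤ s) (hst : s < t)
    (hα : 0 ≤ α) (hG : ∀ y ∈ Icc t0 s, HasDerivAt G (G' y) y) (hG' : ContinuousOn G' (Icc t0 s))
    (hG0 : ∀ y ∈ Icc t0 s, 0 ≤ G y) :
    ∫ y in t0..s, G' y / (t - y) ^ α ≤ G s * (t - s) ^ (-α) := by
  have hpos : ∀ y ∈ Icc t0 s, 0 < t - y := fun y hy => sub_pos.2 (hy.2.trans_lt hst)
  have hkernel : ∀ p : ℝ, ContinuousOn (fun y => (t - y) ^ p) (Icc t0 s) := fun p =>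
    (continuousOn_const.sub continuousOn_id).rpow_const fun y hy => Or.inl (hpos y hy).ne'
  have hGc : ContinuousOn G (Icc t0 s) := fun y hy =>
    (hG y hy).continuousAt.continuousWithinAt
  set W' := fun y => G' y * (t - y) ^ (-α) + G y * (α * (t - y) ^ (-α - 1))
  have hW : ∀ y ∈ Icc t0 s, HasDerivAt (fun z => G z * (t - z) ^ (-α)) (W' y) y := fun y hy =>
    ((hG y hy).mul (((hasDerivAt_id y).const_sub t).rpow_const
      (Or.inl (hpos y hy).ne'))).congr_deriv (by simp only [W', id]; ring)
  have hW' : IntervalIntegrable W' volume t0 s := by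
    refine ContinuousOn.intervalIntegrable ?_
    rw [uIcc_of_le hs]
    exact (hG'.mul (hkernel _)).add (hGc.mul (continuousOn_const.mul (hkernel _)))
  calc ∫ y in t0..s, G' y / (t - y) ^ α = ∫ y in t0..s, G' y * (t - y) ^ (-α) := by
        refine intervalIntegral.integral_congr fun y hy => ?_
        rw [uIcc_of_le hs] at hy
        simp only [Real.rpow_neg (hpos y hy).le, div_eq_mul_inv]
    _ ≤ ∫ y in t0..s, W' y := by
        refine intervalIntegral.integral_mono_on hs ?_ hW' fun y hy => ?_
        · refine ContinuousOn.intervalIntegrable ?_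
          rw [uIcc_of_le hs]
          exact hG'.mul (hkernel _)
        · have := mul_nonneg (hG0 y hy)
            (mul_nonneg hα (Real.rpow_nonneg (hpos y hy).le (-α - 1)))
          simp only [W']
          linarith
    _ = G s * (t - s) ^ (-α) - G t0 * (t - t0) ^ (-α) :=
        intervalIntegral.integral_eq_sub_of_hasDerivAt (by rwa [uIcc_of_le hs]) hW'
    _ ≤ G s * (t - s) ^ (-α) :=
        sub_le_self _ (mul_nonneg (hG0 t0 (left_mem_Icc.2 hs))
          (Real.rpow_nonneg (hpos t0 (left_mem_Icc.2 hs)).le _))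

/-- `F s * (t - s) ^ (-α) = -(slope F t s) * (t - s) ^ (1 - α)` and the slope stays bounded. -/
lemma tendsto_mul_sub_rpow_neg_nhdsLT_zero {F : ℝ → ℝ} {F' t α : ℝ} (hF : HasDerivAt F F' t)
    (hFt : F t = 0) (hα : α < 1) :
    Tendsto (fun s => F s * (t - s) ^ (-α)) (𝓝[<] t) (𝓝 0) := by
  have hslope : Tendsto (fun s => F s / (s - t)) (𝓝[<] t) (𝓝 F') := by
    refine (hasDerivAt_iff_tendsto_slope.1 hF |>.mono_left (nhdsLT_le_nhdsNE t)).congr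
      fun s => ?_
    rw [slope_def_field, hFt, sub_zero]
  have hpow : Tendsto (fun s => (t - s) ^ (1 - α)) (𝓝[<] t) (𝓝 0) := by
    have := ((Real.continuous_rpow_const (sub_nonneg.2 hα.le)).comp
      (continuous_sub_left t)).tendsto t
    simp only [Function.comp_def, sub_self, Real.zero_rpow (sub_ne_zero.2 hα.ne')] at this
    exact this.mono_left nhdsWithin_le_nhds
  have hlim := (hslope.mul hpow).neg
  rw [mul_zero, neg_zero] at hlim
  refine hlim.congr' ?_
  filter_upwards [self_mem_nhdsWithin] with s (hs : s < t)
  have hts : 0 < t - s := sub_pos.2 hs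
  rw [sub_eq_add_neg 1 α, Real.rpow_add hts, Real.rpow_one]
  field_simp [hts.ne', (sub_neg.2 hs).ne]
  ring

theorem integral_div_sub_rpow_nonpos_of_isMinOn {F F' : ℝ → ℝ} {t0 t α : ℝ} (ht : t0 ≤ t)
    (hα0 : 0 ≤ α) (hα1 : α < 1) (hF : ∀ y ∈ Icc t0 t, HasDerivAt F (F' y) y)
    (hF' : ContinuousOn F' (Icc t0 t)) (hmin : IsMinOn F (Icc t0 t) t) :
    ∫ y in t0..t, F' y / (t - y) ^ α ≤ 0 := by
  rcases ht.eq_or_lt with rfl | htt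
  · simp
  have hprimitive : Tendsto (fun s => ∫ y in t0..s, F' y / (t - y) ^ α) (𝓝[<] t)
      (𝓝 (∫ y in t0..t, F' y / (t - y) ^ α)) :=
    (intervalIntegral.continuousOn_primitive_interval'
      (intervalIntegrable_div_sub_rpow ht hα1 hF') left_mem_uIcc t right_mem_uIcc
      |>.mono_of_mem_nhdsWithin (by rw [uIcc_of_le ht]; exact Icc_mem_nhdsLT htt)).tendsto
  have hbound := tendsto_mul_sub_rpow_neg_nhdsLT_zero
    ((hF t (right_mem_Icc.2 ht)).sub_const (F t)) (sub_self _) hα1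
  refine le_of_tendsto_of_tendsto hprimitive hbound ?_
  filter_upwards [Ioo_mem_nhdsLT htt] with s hs
  have hsub : Icc t0 s ⊆ Icc t0 t := Icc_subset_Icc_right hs.2.le
  exact integral_div_sub_rpow_le hs.1.le hs.2 hα0 (fun y hy => (hF y (hsub hy)).sub_const _)
    (hF'.mono hsub) fun y hy => sub_nonneg.2 (hmin (hsub hy))

section Caputo

variable {t0 t α : ℝ}

lemma caputo_eq_of_hasDerivAt {f f' : ℝ → ℝ} (ht : t0 ≤ t)
    (hf : ∀ y ∈ Icc t0 t, HasDerivAt f (f' y) y) :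
    caputo t0 α f t =
      if α = 1 then f' t else (1 / Real.Gamma (1 - α)) * ∫ y in t0..t, f' y / (t - y) ^ α := by
  rw [caputo, (hf t (right_mem_Icc.2 ht)).deriv, intervalIntegral.integral_congr fun y hy => ?_]
  rw [uIcc_of_le ht] at hy
  simp only [(hf y hy).deriv]

lemma caputo_const_mul (c : ℝ) (f : ℝ → ℝ) :
    caputo t0 α (fun y => c * f y) t = c * caputo t0 α f t := by
  simp only [caputo, deriv_const_mul_field', mul_div_assoc, intervalIntegral.integral_const_mul]
  split_ifs <;> ring

lemma caputo_sub {f f' g g' : ℝ → ℝ} (ht : t0 ≤ t) (hα : α ≤ 1)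
    (hf : ∀ y ∈ Icc t0 t, HasDerivAt f (f' y) y) (hf' : ContinuousOn f' (Icc t0 t))
    (hg : ∀ y ∈ Icc t0 t, HasDerivAt g (g' y) y) (hg' : ContinuousOn g' (Icc t0 t)) :
    caputo t0 α (fun y => f y - g y) t = caputo t0 α f t - caputo t0 α g t := by
  rw [caputo_eq_of_hasDerivAt ht fun y hy => (hf y hy).fun_sub (hg y hy),
    caputo_eq_of_hasDerivAt ht hf, caputo_eq_of_hasDerivAt ht hg]
  split_ifs with h1
  · rfl
  · have hlt := lt_of_le_of_ne hα h1
    rw [← mul_sub, ← intervalIntegral.integral_sub (intervalIntegrable_div_sub_rpow ht hlt hf')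
      (intervalIntegrable_div_sub_rpow ht hlt hg')]
    simp only [sub_div]

lemma caputo_finset_sum {ι : Type*} (s : Finset ι) {f f' : ι → ℝ → ℝ} (ht : t0 ≤ t)
    (hα : α ≤ 1) (hf : ∀ i ∈ s, ∀ y ∈ Icc t0 t, HasDerivAt (f i) (f' i y) y)
    (hf' : ∀ i ∈ s, ContinuousOn (f' i) (Icc t0 t)) :
    caputo t0 α (fun y => ∑ i ∈ s, f i y) t = ∑ i ∈ s, caputo t0 α (f i) t := by
  rw [caputo_eq_of_hasDerivAt ht fun y hy => HasDerivAt.fun_sum fun i hi => hf i hi y hy,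
    Finset.sum_congr rfl fun i hi => caputo_eq_of_hasDerivAt ht (hf i hi)]
  split_ifs with h1
  · rfl
  · simp only [Finset.sum_div]
    rw [intervalIntegral.integral_finsetSum fun i hi =>
      intervalIntegrable_div_sub_rpow ht (lt_of_le_of_ne hα h1) (hf' i hi), Finset.mul_sum]

theorem caputo_nonpos_of_isMinOn {F F' : ℝ → ℝ} (ht : t0 ≤ t) (hα0 : 0 ≤ α) (hα1 : α ≤ 1)
    (hF : ∀ y ∈ Icc t0 t, HasDerivAt F (F' y) y) (hF' : ContinuousOn F' (Icc t0 t))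
    (hmin : IsMinOn F (Icc t0 t) t) (hFt : F' t = 0) :
    caputo t0 α F t ≤ 0 := by
  rw [caputo_eq_of_hasDerivAt ht hF]
  split_ifs with h1
  · exact hFt.le
  · have hlt := lt_of_le_of_ne hα1 h1
    exact mul_nonpos_of_nonneg_of_nonpos
      (one_div_nonneg.2 (Real.Gamma_pos_of_pos (sub_pos.2 hlt)).le)
      (integral_div_sub_rpow_nonpos_of_isMinOn ht hα0 hlt hF hF' hmin)

end Caputo

lemma ContinuousOn.integral_hasDerivAt_right {φ : ℝ → ℝ} {S : Set ℝ} {p x : ℝ}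
    (hφ : ContinuousOn φ S) (hS : IsOpen S) (hS' : S.OrdConnected) (hp : p ∈ S) (hx : x ∈ S) :
    HasDerivAt (fun z => ∫ s in p..z, φ s) (φ x) x :=
  intervalIntegral.integral_hasDerivAt_right
    ((hφ.mono (hS'.uIcc_subset hp hx)).intervalIntegrable)
    (hφ.stronglyMeasurableAtFilter hS x hx) (hφ.continuousAt (hS.mem_nhds hx))

lemma mul_sub_le_sub_le_mul_sub_of_monotoneOn {f f' : ℝ → ℝ} {a b : ℝ} (hab : a < b)
    (hf : ∀ x ∈ Icc a b, HasDerivAt f (f' x) x) (hf' : MonotoneOn f' (Icc a b)) :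
    f' a * (b - a) ≤ f b - f a ∧ f b - f a ≤ f' b * (b - a) := by
  obtain ⟨c, hc, hslope⟩ := exists_hasDerivAt_eq_slope f f' hab
    (fun x hx => (hf x hx).continuousAt.continuousWithinAt)
    fun x hx => hf x (Ioo_subset_Icc_self hx)
  have hfc : f b - f a = f' c * (b - a) := by
    rw [hslope, div_mul_cancel₀ _ (sub_pos.2 hab).ne']
  have hba : 0 ≤ b - a := (sub_pos.2 hab).le
  have hcab : c ∈ Icc a b := Ioo_subset_Icc_self hc
  rw [hfc]
  exact ⟨mul_le_mul_of_nonneg_right (hf' (left_mem_Icc.2 hab.le) hcab hc.1.le) hba,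
    mul_le_mul_of_nonneg_right (hf' hcab (right_mem_Icc.2 hab.le) hc.2.le) hba⟩

lemma mul_sub_le_sub_of_monotoneOn {f f' : ℝ → ℝ} {S : Set ℝ} (hS : S.OrdConnected)
    (hf : ∀ x ∈ S, HasDerivAt f (f' x) x) (hf' : MonotoneOn f' S) {x y : ℝ} (hx : x ∈ S)
    (hy : y ∈ S) : f' x * (y - x) ≤ f y - f x := by
  rcases lt_trichotomy x y with hxy | rfl | hyx
  · exact (mul_sub_le_sub_le_mul_sub_of_monotoneOn hxy (fun z hz => hf z (hS.out hx hy hz))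
      (hf'.mono (hS.out hx hy))).1
  · simp
  · have := (mul_sub_le_sub_le_mul_sub_of_monotoneOn hyx (fun z hz => hf z (hS.out hy hx hz))
      (hf'.mono (hS.out hy hx))).2
    linarith

theorem caputo_comp_le_mul_caputo {Ψ φ u u' : ℝ → ℝ} {S : Set ℝ} {t0 t α : ℝ} (ht : t0 ≤ t)
    (hα0 : 0 ≤ α) (hα1 : α ≤ 1) (hS : S.OrdConnected) (hΨ : ∀ x ∈ S, HasDerivAt Ψ (φ x) x)
    (hφc : ContinuousOn φ S) (hφm : MonotoneOn φ S)
    (hu : ∀ y ∈ Icc t0 t, HasDerivAt u (u' y) y) (hu' : ContinuousOn u' (Icc t0 t))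
    (huS : MapsTo u (Icc t0 t) S) :
    caputo t0 α (fun y => Ψ (u y)) t ≤ φ (u t) * caputo t0 α u t := by
  have hcomp : ∀ y ∈ Icc t0 t, HasDerivAt (fun y => Ψ (u y)) (φ (u y) * u' y) y :=
    fun y hy => (hΨ _ (huS hy)).comp y (hu y hy)
  have hcomp' : ContinuousOn (fun y => φ (u y) * u' y) (Icc t0 t) :=
    (hφc.comp (fun y hy => (hu y hy).continuousAt.continuousWithinAt) huS).mul hu'
  have hlin : ∀ y ∈ Icc t0 t, HasDerivAt (fun y => φ (u t) * u y) (φ (u t) * u' y) y :=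
    fun y hy => (hu y hy).const_mul _
  rw [← sub_nonpos, ← caputo_const_mul,
    ← caputo_sub ht hα1 hcomp hcomp' hlin (continuousOn_const.mul hu')]
  refine caputo_nonpos_of_isMinOn ht hα0 hα1 (fun y hy => (hcomp y hy).sub (hlin y hy))
    (hcomp'.sub (continuousOn_const.mul hu')) (fun y hy => ?_) (sub_self _)
  have := mul_sub_le_sub_of_monotoneOn hS hΨ hφm (huS (right_mem_Icc.2 ht)) (huS hy)
  simp only [mem_ofPred_eq]
  linarith

theorem caputo_sum_volterra_estimate
    (n : ℕ) (t0 α : ℝ)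
    (u : Fin n → ℝ → ℝ) (a ustar : Fin n → ℝ) (g : Fin n → ℝ → ℝ)
    (hu : ∀ i, ContDiff ℝ 1 (u i))
    (hupos : ∀ i, ∀ t, t0 ≤ t → 0 < u i t)
    (ha : ∀ i, 0 < a i) (hustar : ∀ i, 0 < ustar i)
    (hgdiff : ∀ i, DifferentiableOn ℝ (g i) (Set.Ioi (0:ℝ)))
    (hgpos : ∀ i, ∀ s, 0 < s → 0 < g i s)
    (hgmono : ∀ i, StrictMonoOn (g i) (Set.Ioi (0:ℝ)))
    (hα0 : 0 < α) (hα1 : α ≤ 1)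
    (t : ℝ) (ht : t0 ≤ t) :
    caputo t0 α
      (fun τ => ∑ i, a i *
        (u i τ - ustar i - ∫ s in (ustar i)..(u i τ), g i (ustar i) / g i s)) t
      ≤ ∑ i, a i * (1 - g i (ustar i) / g i (u i t)) * caputo t0 α (u i) t := by
  set φ : Fin n → ℝ → ℝ := fun i x => 1 - g i (ustar i) / g i x
  set Ψ : Fin n → ℝ → ℝ := fun i x => x - ustar i - ∫ s in (ustar i)..x, g i (ustar i) / g i s
  have hquot (i) : ContinuousOn (fun x => g i (ustar i) / g i x) (Ioi 0) :=
    continuousOn_const.div (hgdiff i).continuousOn fun x hx => (hgpos i x hx).ne'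
  have hφc (i) : ContinuousOn (φ i) (Ioi 0) := continuousOn_const.sub (hquot i)
  have hφm (i) : MonotoneOn (φ i) (Ioi 0) := fun x hx y hy hxy =>
    sub_le_sub_left (div_le_div_of_nonneg_left (hgpos i _ (hustar i)).le (hgpos i x hx)
      ((hgmono i).monotoneOn hx hy hxy)) 1
  have hΨ (i) : ∀ x ∈ Ioi (0 : ℝ), HasDerivAt (Ψ i) (φ i x) x := fun x hx =>
    ((hasDerivAt_id x).sub_const _).sub <|
      (hquot i).integral_hasDerivAt_right isOpen_Ioi ordConnected_Ioi (hustar i) hx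
  have hud (i y) : HasDerivAt (u i) (deriv (u i) y) y :=
    ((hu i).differentiable one_ne_zero y).hasDerivAt
  have hu' (i) : ContinuousOn (deriv (u i)) (Icc t0 t) :=
    ((hu i).continuous_deriv le_rfl).continuousOn
  have huS (i) : MapsTo (u i) (Icc t0 t) (Ioi 0) := fun y hy => hupos i y hy.1
  refine (caputo_finset_sum Finset.univ ht hα1 (f := fun i τ => a i * Ψ i (u i τ))
    (fun i _ y hy => ((hΨ i _ (huS i hy)).comp y (hud i y)).const_mul (a i))
    fun i _ => continuousOn_const.mul (((hφc i).comp
      (fun y _ => (hud i y).continuousAt.continuousWithinAt) (huS i)).mul (hu' i))).trans_le ?_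
  refine Finset.sum_le_sum fun i _ => ?_
  rw [caputo_const_mul, mul_assoc]
  exact mul_le_mul_of_nonneg_left (caputo_comp_le_mul_caputo ht hα0.le hα1 ordConnected_Ioi
    (hΨ i) (hφc i) (hφm i) (fun y _ => hud i y) (hu' i) (huS i)) (ha i).le
end

section
/- Let $\alpha\in(0,1)$, $t>t_0$, and let $w:[t_0,t]\to[0,\infty)$ be continuously differentiable with $w(t)=0$ and $\lim_{y\to t^-}(t-y)^{-\alpha}w(y)=0$. Then $\frac{1}{\Gamma(1-\alpha)}\int_{t_0}^{t}\frac{w'(y)}{(t-y)^{\alpha}}\,dy = -\frac{(t-t_0)^{-\alpha}}{\Gamma(1-\alpha)}w(t_0)-\int_{t_0}^{t}\frac{\alpha(t-y)^{-(\alpha+1)}}{\Gamma(1-\alpha)}w(y)\,dy \le 0$. -/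
/-!
Integrate by parts against the kernel `(t - y) ^ (-α)`, whose derivative in `y` is
`α (t - y) ^ (-(α + 1))`. The boundary term at `t` vanishes by the assumed limit, and both
integrals converge: `(t - y) ^ (-α)` is integrable for `α < 1`, while `w` is Lipschitz and
vanishes at `t`, so `(t - y) ^ (-(α + 1)) w y = O((t - y) ^ (-α))`. The sign then comes from
`w ≥ 0` and `Γ(1 - α) > 0`.
-/

open MeasureTheory Filter Set Topology

lemma intervalIntegrable_sub_rpow {r : ℝ} (hr : -1 < r) (a b c : ℝ) :
    IntervalIntegrable (fun y => (c - y) ^ r) volume a b := by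
  simpa using
    (intervalIntegral.intervalIntegrable_rpow' (a := c - a) (b := c - b) hr).comp_sub_left c

lemma hasDerivAt_sub_rpow_neg (α : ℝ) {b y : ℝ} (hy : y < b) :
    HasDerivAt (fun y => (b - y) ^ (-α)) (α * (b - y) ^ (-(α + 1))) y := by
  refine (((hasDerivAt_id y).const_sub b).rpow_const (p := -α)
    (Or.inl (sub_pos.2 hy).ne')).congr_deriv ?_
  rw [show -α - 1 = -(α + 1) by ring]
  simp

lemma exists_abs_le_mul_sub_of_contDiffOn {w : ℝ → ℝ} {a b : ℝ} (hab : a < b)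
    (hw : ContDiffOn ℝ 1 w (Icc a b)) (hwb : w b = 0) :
    ∃ M, ∀ y ∈ Icc a b, |w y| ≤ M * (b - y) := by
  obtain ⟨M, hM⟩ := isCompact_Icc.exists_bound_of_continuousOn
    (hw.continuousOn_derivWithin (uniqueDiffOn_Icc hab) le_rfl)
  refine ⟨M, fun y hy => ?_⟩
  have h := (convex_Icc a b).norm_image_sub_le_of_norm_derivWithin_le
    (hw.differentiableOn one_ne_zero) hM (right_mem_Icc.2 hab.le) hy
  rwa [hwb, sub_zero, Real.norm_eq_abs, Real.norm_eq_abs, abs_sub_comm,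
    abs_of_nonneg (sub_nonneg.2 hy.2)] at h

lemma intervalIntegrable_sub_rpow_neg_succ_mul {w : ℝ → ℝ} {a b α M : ℝ} (hα : α < 1)
    (hab : a ≤ b) (hw : ContinuousOn w (Icc a b)) (hlin : ∀ y ∈ Icc a b, |w y| ≤ M * (b - y)) :
    IntervalIntegrable (fun y => (b - y) ^ (-(α + 1)) * w y) volume a b := by
  have hIoo : volume.restrict (uIoc a b) = volume.restrict (Ioo a b) := by
    rw [uIoc_of_le hab, restrict_Ioo_eq_restrict_Ioc]
  refine ((intervalIntegrable_sub_rpow (r := -α) (by linarith) a b b).const_mul M).mono_fun'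
    ?_ ?_
  · rw [hIoo]
    refine ContinuousOn.aestronglyMeasurable ?_ measurableSet_Ioo
    exact ((continuousOn_const.sub continuousOn_id).rpow_const
      fun y hy => Or.inl (sub_pos.2 hy.2).ne').mul (hw.mono Ioo_subset_Icc_self)
  · rw [hIoo]
    filter_upwards [ae_restrict_mem measurableSet_Ioo] with y hy
    have hby : 0 < b - y := sub_pos.2 hy.2
    calc ‖(b - y) ^ (-(α + 1)) * w y‖ = (b - y) ^ (-(α + 1)) * |w y| := by
          rw [norm_mul, Real.norm_eq_abs, Real.norm_eq_abs,
            abs_of_pos (Real.rpow_pos_of_pos hby _)]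
      _ ≤ (b - y) ^ (-(α + 1)) * (M * (b - y)) := by
          gcongr
          exact hlin y (Ioo_subset_Icc_self hy)
      _ = M * (b - y) ^ (-α) := by
          rw [mul_left_comm, ← Real.rpow_add_one hby.ne', neg_add, neg_add_cancel_right]

theorem integral_sub_rpow_neg_mul_deriv {w : ℝ → ℝ} {a b α : ℝ} (hα : α < 1) (hab : a < b)
    (hw : ContDiffOn ℝ 1 w (Icc a b)) (hwb : w b = 0)
    (hlim : Tendsto (fun y => (b - y) ^ (-α) * w y) (𝓝[<] b) (𝓝 0)) :
    ∫ y in a..b, (b - y) ^ (-α) * deriv w y =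
      -((b - a) ^ (-α) * w a) - ∫ y in a..b, α * (b - y) ^ (-(α + 1)) * w y := by
  obtain ⟨M, hM⟩ := exists_abs_le_mul_sub_of_contDiffOn hab hw hwb
  have hI₁ : IntervalIntegrable (fun y => α * (b - y) ^ (-(α + 1)) * w y) volume a b := by
    simpa only [mul_assoc] using
      (intervalIntegrable_sub_rpow_neg_succ_mul hα hab.le hw.continuousOn hM).const_mul α
  have hI₂ : IntervalIntegrable (fun y => (b - y) ^ (-α) * deriv w y) volume a b := by
    have hw' : ContinuousOn (derivWithin w (Icc a b)) (uIcc a b) := by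
      rw [uIcc_of_le hab.le]
      exact hw.continuousOn_derivWithin (uniqueDiffOn_Icc hab) le_rfl
    refine ((intervalIntegrable_sub_rpow (r := -α) (by linarith) a b b).mul_continuousOn
      hw').congr_uIoo fun y hy => ?_
    rw [uIoo_of_le hab.le] at hy
    simp only [derivWithin_of_mem_nhds (Icc_mem_nhds hy.1 hy.2)]
  have hderiv : ∀ y ∈ Ioo a b, HasDerivAt (fun y => (b - y) ^ (-α) * w y)
      (α * (b - y) ^ (-(α + 1)) * w y + (b - y) ^ (-α) * deriv w y) y := fun y hy =>
    (hasDerivAt_sub_rpow_neg α hy.2).mul (((hw.differentiableOn one_ne_zero) y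
      (Ioo_subset_Icc_self hy)).differentiableAt (Icc_mem_nhds hy.1 hy.2)).hasDerivAt
  have hcont_a :
      Tendsto (fun y => (b - y) ^ (-α) * w y) (𝓝[>] a) (𝓝 ((b - a) ^ (-α) * w a)) := by
    rw [← nhdsWithin_Ioo_eq_nhdsGT hab]
    exact (((continuousAt_const.sub continuousAt_id).rpow_const
      (Or.inl (sub_pos.2 hab).ne')).continuousWithinAt.mul
      (hw.continuousOn a (left_mem_Icc.2 hab.le))).mono Ioo_subset_Icc_self
  -- This FTC only needs one-sided limits of the primitive, so the singularity at `b` is harmless.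
  have hFTC := intervalIntegral.integral_eq_sub_of_hasDerivAt_of_tendsto hab hderiv
    (hI₁.add hI₂) hcont_a hlim
  rw [intervalIntegral.integral_add hI₁ hI₂] at hFTC
  linarith

theorem caputo_integration_by_parts
    (α t0 t : ℝ) (hα0 : 0 < α) (hα1 : α < 1) (ht : t0 < t)
    (w : ℝ → ℝ)
    (hw : ContDiffOn ℝ 1 w (Set.Icc t0 t))
    (hwnonneg : ∀ y ∈ Set.Icc t0 t, 0 ≤ w y)
    (hwt : w t = 0)
    (hlim : Tendsto (fun y => (t - y) ^ (-α) * w y)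
      (nhdsWithin t (Set.Iio t)) (nhds 0)) :
    (1 / Real.Gamma (1 - α)) * (∫ y in t0..t, deriv w y / (t - y) ^ α)
      = -((t - t0) ^ (-α) / Real.Gamma (1 - α)) * w t0
        - ∫ y in t0..t, α * (t - y) ^ (-(α + 1)) / Real.Gamma (1 - α) * w y ∧
    (1 / Real.Gamma (1 - α)) * (∫ y in t0..t, deriv w y / (t - y) ^ α) ≤ 0 := by
  have hparts := integral_sub_rpow_neg_mul_deriv hα1 ht hw hwt hlim
  have hkernel :
      ∫ y in t0..t, deriv w y / (t - y) ^ α = ∫ y in t0..t, (t - y) ^ (-α) * deriv w y :=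
    intervalIntegral.integral_congr fun y hy => by
      rw [uIcc_of_le ht.le] at hy
      rw [Real.rpow_neg (sub_nonneg.2 hy.2), div_eq_inv_mul]
  have hscale : ∫ y in t0..t, α * (t - y) ^ (-(α + 1)) / Real.Gamma (1 - α) * w y =
      1 / Real.Gamma (1 - α) * ∫ y in t0..t, α * (t - y) ^ (-(α + 1)) * w y := by
    rw [← intervalIntegral.integral_const_mul]
    congr 1 with y
    ring
  have hboundary : 0 ≤ (t - t0) ^ (-α) * w t0 :=
    mul_nonneg (Real.rpow_nonneg (sub_nonneg.2 ht.le) _) (hwnonneg t0 (left_mem_Icc.2 ht.le))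
  have hbulk : 0 ≤ ∫ y in t0..t, α * (t - y) ^ (-(α + 1)) * w y :=
    intervalIntegral.integral_nonneg ht.le fun y hy =>
      mul_nonneg (mul_nonneg hα0.le (Real.rpow_nonneg (sub_nonneg.2 hy.2) _)) (hwnonneg y hy)
  have hΓ : 0 < Real.Gamma (1 - α) := Real.Gamma_pos_of_pos (by linarith)
  rw [hkernel, hparts, hscale]
  exact ⟨by ring, mul_nonpos_of_nonneg_of_nonpos (by positivity) (by linarith)⟩
end
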